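/- Let S and T be finite sets of real numbers with S ∩ T = ∅ and |S| > |T| ≥ 1, and let K = |S| − |T|. Then for every k with 1 ≤ k ≤ K the set {s ∈ S : H(s) = k} is nonempty, and if r_k denotes the smallest element of {s ∈ S : H(s) = k} that maximizes the profit P over this set, then r_1 < r_2 < … < r_K. -/

import Mathlib

open Finset MeasureTheory

/-- The height function `H(x) = |{s ∈ S : s ≤ x}| − |{t ∈ T : t ≤ x}|`. -/
noncomputable def heightFn (S T : Finset ℝ) (x : ℝ) : ℤ :=
  ((S.filter (fun s => s ≤ x)).card : ℤ) - ((T.filter (fun t => t ≤ x)).card : ℤ)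

/-- The relative height `h^k(x)`: `1` if `H(x) ≥ k` and `−1` otherwise. -/
noncomputable def relHeight (S T : Finset ℝ) (k : ℤ) (x : ℝ) : ℝ :=
  if k ≤ heightFn S T x then 1 else -1

/-- `N` assigns to each point of `S` a nearest neighbor in `T`. -/
def IsNearestNeighbor (S T : Finset ℝ) (N : ℝ → ℝ) : Prop :=
  ∀ s ∈ S, N s ∈ T ∧ ∀ t ∈ T, |s - N s| ≤ |s - t|

/-- The profit `P(s) = ∫_s^m h^{H(s)}(x) dx − |s − N(s)|`, where `m` is the largest
point of `S ∪ T`. -/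
noncomputable def profit (S T : Finset ℝ) (N : ℝ → ℝ) (m s : ℝ) : ℝ :=
  (∫ x in s..m, relHeight S T (heightFn S T s) x) - |s - N s|

lemma card_filter_mono (A : Finset ℝ) :
    Monotone (fun x => ((A.filter (fun s => s ≤ x)).card : ℤ)) := by
  intro x y hxy
  have hsub : A.filter (fun s => s ≤ x) ⊆ A.filter (fun s => s ≤ y) := by
    intro z hz
    rw [Finset.mem_filter] at *
    exact ⟨hz.1, hz.2.trans hxy⟩
  exact_mod_cast Nat.cast_le.2 (Finset.card_le_card hsub)

lemma heightFn_measurable (S T : Finset ℝ) : Measurable (heightFn S T) :=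
  ((card_filter_mono S).measurable).sub ((card_filter_mono T).measurable)

lemma relHeight_measurable (S T : Finset ℝ) (k : ℤ) : Measurable (relHeight S T k) := by
  unfold relHeight
  exact Measurable.ite (measurableSet_le measurable_const (heightFn_measurable S T))
    measurable_const measurable_const

lemma relHeight_intervalIntegrable (S T : Finset ℝ) (k : ℤ) (u v : ℝ) :
    IntervalIntegrable (relHeight S T k) volume u v := by
  apply (intervalIntegrable_const (c := (1:ℝ))).mono_fun
    ((relHeight_measurable S T k).aestronglyMeasurable)
  filter_upwards with x
  unfold relHeight
  split <;> simp

lemma heightFn_congr (S T : Finset ℝ) (u v : ℝ)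
    (h : ∀ z ∈ S ∪ T, z ≤ u ↔ z ≤ v) : heightFn S T u = heightFn S T v := by
  unfold heightFn
  have h1 : S.filter (fun s => s ≤ u) = S.filter (fun s => s ≤ v) := by
    ext z; simp only [Finset.mem_filter]
    exact and_congr_right (fun hz => h z (Finset.mem_union_left _ hz))
  have h2 : T.filter (fun t => t ≤ u) = T.filter (fun t => t ≤ v) := by
    ext z; simp only [Finset.mem_filter]
    exact and_congr_right (fun hz => h z (Finset.mem_union_right _ hz))
  rw [h1, h2]

lemma exists_last_pt (S T : Finset ℝ) (u y : ℝ) (huy : u ≤ y)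
    (hne : heightFn S T u ≠ heightFn S T y) :
    ∃ p, p ∈ S ∪ T ∧ u < p ∧ p ≤ y ∧ heightFn S T p = heightFn S T y := by
  set F := (S ∪ T).filter (fun z => u < z ∧ z ≤ y) with hF
  have hFne : F.Nonempty := by
    by_contra hemp
    rw [Finset.not_nonempty_iff_eq_empty] at hemp
    apply hne
    apply heightFn_congr
    intro z hz
    constructor
    · intro h; exact h.trans huy
    · intro h
      by_contra hzu
      push_neg at hzu
      have hzF : z ∈ F := Finset.mem_filter.2 ⟨hz, hzu, h⟩
      rw [hemp] at hzF
      exact absurd hzF (Finset.notMem_empty z)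
  set p := F.max' hFne with hp
  have hpF : p ∈ F := F.max'_mem hFne
  rw [Finset.mem_filter] at hpF
  refine ⟨p, hpF.1, hpF.2.1, hpF.2.2, ?_⟩
  apply heightFn_congr
  intro z hz
  constructor
  · intro h; exact h.trans hpF.2.2
  · intro h
    by_contra hzp
    push_neg at hzp
    have hzF : z ∈ F := Finset.mem_filter.2 ⟨hz, hpF.2.1.trans hzp, h⟩
    exact absurd (Finset.le_max' F z hzF) (not_le.2 hzp)

lemma heightFn_jump (S T : Finset ℝ) (hdisj : Disjoint S T) (c y : ℝ)
    (hc : c ∈ S ∪ T) (hyc : y < c)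
    (hgap : ∀ z ∈ S ∪ T, y < z → z ≤ c → z = c) :
    (c ∈ S ∧ heightFn S T c = heightFn S T y + 1) ∨
    (c ∈ T ∧ heightFn S T c = heightFn S T y - 1) := by
  rcases Finset.mem_union.1 hc with hcS | hcT
  · left
    refine ⟨hcS, ?_⟩
    have hSf : S.filter (fun s => s ≤ c) = insert c (S.filter (fun s => s ≤ y)) := by
      ext z
      simp only [Finset.mem_filter, Finset.mem_insert]
      constructor
      · rintro ⟨hzS, hzc⟩
        rcases le_or_gt z y with h' | h'
        · exact Or.inr ⟨hzS, h'⟩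
        · exact Or.inl (hgap z (Finset.mem_union_left _ hzS) h' hzc)
      · rintro (rfl | ⟨hzS, hzy⟩)
        · exact ⟨hcS, le_refl _⟩
        · exact ⟨hzS, hzy.trans hyc.le⟩
    have hTf : T.filter (fun t => t ≤ c) = T.filter (fun t => t ≤ y) := by
      ext z
      simp only [Finset.mem_filter]
      constructor
      · rintro ⟨hzT, hzc⟩
        refine ⟨hzT, ?_⟩
        by_contra h'
        push_neg at h'
        have hzc' := hgap z (Finset.mem_union_right _ hzT) h' hzc
        subst hzc'
        exact absurd hzT (Finset.disjoint_left.1 hdisj hcS)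
      · rintro ⟨hzT, hzy⟩
        exact ⟨hzT, hzy.trans hyc.le⟩
    have hnm : c ∉ S.filter (fun s => s ≤ y) := by
      simp only [Finset.mem_filter, not_and]
      intro _
      exact not_le.2 hyc
    unfold heightFn
    rw [hSf, hTf, Finset.card_insert_of_notMem hnm]
    push_cast
    ring
  · right
    refine ⟨hcT, ?_⟩
    have hTf : T.filter (fun t => t ≤ c) = insert c (T.filter (fun t => t ≤ y)) := by
      ext z
      simp only [Finset.mem_filter, Finset.mem_insert]
      constructor
      · rintro ⟨hzT, hzc⟩
        rcases le_or_gt z y with h' | h'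
        · exact Or.inr ⟨hzT, h'⟩
        · exact Or.inl (hgap z (Finset.mem_union_right _ hzT) h' hzc)
      · rintro (rfl | ⟨hzT, hzy⟩)
        · exact ⟨hcT, le_refl _⟩
        · exact ⟨hzT, hzy.trans hyc.le⟩
    have hSf : S.filter (fun s => s ≤ c) = S.filter (fun s => s ≤ y) := by
      ext z
      simp only [Finset.mem_filter]
      constructor
      · rintro ⟨hzS, hzc⟩
        refine ⟨hzS, ?_⟩
        by_contra h'
        push_neg at h'
        have hzc' := hgap z (Finset.mem_union_left _ hzS) h' hzc
        subst hzc'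
        exact absurd hcT (Finset.disjoint_left.1 hdisj hzS)
      · rintro ⟨hzS, hzy⟩
        exact ⟨hzS, hzy.trans hyc.le⟩
    have hnm : c ∉ T.filter (fun t => t ≤ y) := by
      simp only [Finset.mem_filter, not_and]
      intro _
      exact not_le.2 hyc
    unfold heightFn
    rw [hSf, hTf, Finset.card_insert_of_notMem hnm]
    push_cast
    ring

lemma crossing (S T : Finset ℝ) (hdisj : Disjoint S T) (x₀ x₁ : ℝ) (k : ℤ)
    (h01 : x₀ ≤ x₁) (h0 : heightFn S T x₀ < k) (h1 : k ≤ heightFn S T x₁) :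
    ∃ c ∈ S, x₀ < c ∧ c ≤ x₁ ∧ heightFn S T c = k ∧
      ∀ y, x₀ ≤ y → y < c → heightFn S T y < k := by
  set F := (S ∪ T).filter (fun z => x₀ < z ∧ z ≤ x₁ ∧ k ≤ heightFn S T z) with hFdef
  have hFne : F.Nonempty := by
    obtain ⟨p, hpST, hp0, hp1, hpH⟩ := exists_last_pt S T x₀ x₁ h01 (by omega)
    exact ⟨p, Finset.mem_filter.2 ⟨hpST, hp0, hp1, hpH ▸ h1⟩⟩
  set c := F.min' hFne with hcdef
  have hcF : c ∈ F := F.min'_mem hFne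
  rw [Finset.mem_filter] at hcF
  obtain ⟨hcST, hc0, hc1, hcH⟩ := hcF
  have hclaim : ∀ y, x₀ ≤ y → y < c → heightFn S T y < k := by
    intro y hy0 hyc
    by_contra hky
    push_neg at hky
    obtain ⟨p, hpST, hp0, hpy, hpH⟩ := exists_last_pt S T x₀ y hy0 (by omega)
    have hpF : p ∈ F := Finset.mem_filter.2 ⟨hpST, hp0,
      (hpy.trans (hyc.le.trans hc1)), hpH ▸ hky⟩
    exact absurd (Finset.min'_le F p hpF) (not_le.2 (lt_of_le_of_lt hpy hyc))
  -- the point just before c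
  set D2 := (S ∪ T).filter (fun z => x₀ < z ∧ z < c) with hD2def
  have hy0 : ∃ y0, x₀ ≤ y0 ∧ y0 < c ∧ ∀ z ∈ S ∪ T, y0 < z → z ≤ c → z = c := by
    by_cases hD2 : D2.Nonempty
    · refine ⟨D2.max' hD2, ?_, ?_, ?_⟩
      · have := D2.max'_mem hD2
        rw [Finset.mem_filter] at this
        exact this.2.1.le
      · have := D2.max'_mem hD2
        rw [Finset.mem_filter] at this
        exact this.2.2
      · intro z hzST hz1 hz2
        by_contra hzc
        have hzc' : z < c := lt_of_le_of_ne hz2 hzc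
        have hx0z : x₀ < z := by
          have := D2.max'_mem hD2
          rw [Finset.mem_filter] at this
          exact lt_of_lt_of_le this.2.1 (le_of_lt hz1)
        have hzD2 : z ∈ D2 := Finset.mem_filter.2 ⟨hzST, hx0z, hzc'⟩
        exact absurd (Finset.le_max' D2 z hzD2) (not_le.2 hz1)
    · refine ⟨x₀, le_refl _, hc0, ?_⟩
      intro z hzST hz1 hz2
      by_contra hzc
      have hzc' : z < c := lt_of_le_of_ne hz2 hzc
      exact hD2 ⟨z, Finset.mem_filter.2 ⟨hzST, hz1, hzc'⟩⟩
  obtain ⟨y0, hy00, hy0c, hgap⟩ := hy0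
  have hHy0 : heightFn S T y0 < k := hclaim y0 hy00 hy0c
  rcases heightFn_jump S T hdisj c y0 hcST hy0c hgap with ⟨hcS, hjump⟩ | ⟨hcT, hjump⟩
  · exact ⟨c, hcS, hc0, hc1, by omega, hclaim⟩
  · omega

lemma crossing_left (S T : Finset ℝ) (hdisj : Disjoint S T) (hne : (S ∪ T).Nonempty)
    (a : ℝ) (k : ℤ) (hk : 1 ≤ k) (ha : a ∈ S ∪ T) (hHa : k ≤ heightFn S T a) :
    ∃ b' ∈ S, b' ≤ a ∧ heightFn S T b' = k ∧
      ∀ y, b' ≤ y → y ≤ a → k ≤ heightFn S T y := by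
  set D := (S ∪ T).filter (fun z => z < a ∧ heightFn S T z < k) with hDdef
  have hx0 : ∃ x₀, x₀ < a ∧ heightFn S T x₀ < k ∧
      ∀ z ∈ S ∪ T, x₀ < z → z < a → k ≤ heightFn S T z := by
    by_cases hD : D.Nonempty
    · have hmem := D.max'_mem hD
      rw [Finset.mem_filter] at hmem
      refine ⟨D.max' hD, hmem.2.1, hmem.2.2, ?_⟩
      intro z hzST hz1 hz2
      by_contra hzk
      push_neg at hzk
      have hzD : z ∈ D := Finset.mem_filter.2 ⟨hzST, hz2, hzk⟩
      exact absurd (Finset.le_max' D z hzD) (not_le.2 hz1)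
    · refine ⟨(S ∪ T).min' hne - 1, ?_, ?_, ?_⟩
      · have := Finset.min'_le (S ∪ T) a ha
        linarith
      · have hf : heightFn S T ((S ∪ T).min' hne - 1) = 0 := by
          unfold heightFn
          have hS : S.filter (fun s => s ≤ (S ∪ T).min' hne - 1) = ∅ := by
            rw [Finset.filter_eq_empty_iff]
            intro z hz
            have := Finset.min'_le (S ∪ T) z (Finset.mem_union_left _ hz)
            push_neg
            linarith
          have hT : T.filter (fun t => t ≤ (S ∪ T).min' hne - 1) = ∅ := by
            rw [Finset.filter_eq_empty_iff]
            intro z hz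
            have := Finset.min'_le (S ∪ T) z (Finset.mem_union_right _ hz)
            push_neg
            linarith
          rw [hS, hT]
          simp
        omega
      · intro z hzST hz1 hz2
        by_contra hzk
        push_neg at hzk
        exact hD ⟨z, Finset.mem_filter.2 ⟨hzST, hz2, hzk⟩⟩
  obtain ⟨x₀, hx0a, hHx0, hDprop⟩ := hx0
  obtain ⟨b', hb'S, hb'0, hb'1, hb'H, hb'claim⟩ :=
    crossing S T hdisj x₀ a k hx0a.le hHx0 hHa
  refine ⟨b', hb'S, hb'1, hb'H, ?_⟩
  intro y hy1 hy2
  by_contra hky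
  push_neg at hky
  rcases eq_or_lt_of_le hy2 with rfl | hya
  · omega
  · have hne' : heightFn S T b' ≠ heightFn S T y := by omega
    obtain ⟨p, hpST, hp1, hp2, hpH⟩ := exists_last_pt S T b' y hy1 hne'
    have : k ≤ heightFn S T p := hDprop p hpST (hb'0.trans hp1) (lt_of_le_of_lt hp2 hya)
    omega

lemma relHeight_neg_one_le (S T : Finset ℝ) (k : ℤ) (x : ℝ) : -1 ≤ relHeight S T k x := by
  unfold relHeight
  split <;> norm_num

lemma relHeight_le_one (S T : Finset ℝ) (k : ℤ) (x : ℝ) : relHeight S T k x ≤ 1 := by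
  unfold relHeight
  split <;> norm_num

lemma relHeight_anti (S T : Finset ℝ) (k k' : ℤ) (hkk' : k ≤ k') (x : ℝ) :
    relHeight S T k' x ≤ relHeight S T k x := by
  by_cases h1 : k' ≤ heightFn S T x
  · have h2 : k ≤ heightFn S T x := le_trans hkk' h1
    simp [relHeight, h1, h2]
  · calc relHeight S T k' x = -1 := by simp [relHeight, h1]
      _ ≤ relHeight S T k x := relHeight_neg_one_le S T k x

lemma integral_relHeight_of_ge (S T : Finset ℝ) (k : ℤ) (u v : ℝ) (huv : u ≤ v)
    (h : ∀ x, u ≤ x → x ≤ v → k ≤ heightFn S T x) :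
    ∫ x in u..v, relHeight S T k x = v - u := by
  have : ∫ x in u..v, relHeight S T k x = ∫ x in u..v, (1 : ℝ) := by
    apply intervalIntegral.integral_congr
    intro x hx
    rw [Set.uIcc_of_le huv] at hx
    simp [relHeight, h x hx.1 hx.2]
  rw [this, intervalIntegral.integral_const, smul_eq_mul, mul_one]

lemma integral_relHeight_of_lt (S T : Finset ℝ) (k : ℤ) (u v : ℝ) (huv : u ≤ v)
    (h : ∀ x, u ≤ x → x < v → heightFn S T x < k) :
    ∫ x in u..v, relHeight S T k x = -(v - u) := by
  rw [intervalIntegral.integral_of_le huv, MeasureTheory.integral_Ioc_eq_integral_Ioo]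
  have : ∫ x in Set.Ioo u v, relHeight S T k x = ∫ x in Set.Ioo u v, (-1 : ℝ) := by
    apply MeasureTheory.setIntegral_congr_fun measurableSet_Ioo
    intro x hx
    have := h x hx.1.le hx.2
    simp [relHeight]
    omega
  rw [this, MeasureTheory.setIntegral_const, Real.volume_real_Ioo_of_le huv,
    smul_eq_mul]
  ring

/-- for every `1 ≤ k ≤ K = |S| − |T|` the set of points of `S` of
height `k` is nonempty, and if `r_k` denotes the smallest maximizer of the profit
over this set, then `r_1 < r_2 < … < r_K`. -/
theorem leftmost_profit_maximizers_increasing (S T : Finset ℝ)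
    (hdisj : Disjoint S T) (hST : T.card < S.card) (hT : 1 ≤ T.card)
    (hne : (S ∪ T).Nonempty)
    (N : ℝ → ℝ) (hN : IsNearestNeighbor S T N) :
    (∀ k : Fin (S.card - T.card), ∃ s ∈ S, heightFn S T s = (k : ℤ) + 1) ∧
    ∀ r : Fin (S.card - T.card) → ℝ,
      (∀ k, r k ∈ S ∧ heightFn S T (r k) = (k : ℤ) + 1 ∧
        (∀ s ∈ S, heightFn S T s = (k : ℤ) + 1 →
          profit S T N ((S ∪ T).max' hne) s ≤ profit S T N ((S ∪ T).max' hne) (r k)) ∧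
        (∀ s ∈ S, heightFn S T s = (k : ℤ) + 1 →
          profit S T N ((S ∪ T).max' hne) s = profit S T N ((S ∪ T).max' hne) (r k) →
            r k ≤ s)) →
      StrictMono r := by
  have hmH : heightFn S T ((S ∪ T).max' hne) = (S.card : ℤ) - (T.card : ℤ) := by
    unfold heightFn
    rw [Finset.filter_true_of_mem (fun z hz => Finset.le_max' _ z (Finset.mem_union_left _ hz)),
      Finset.filter_true_of_mem (fun z hz => Finset.le_max' _ z (Finset.mem_union_right _ hz))]
  have hlowH : heightFn S T ((S ∪ T).min' hne - 1) = 0 := by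
    unfold heightFn
    have hS : S.filter (fun s => s ≤ (S ∪ T).min' hne - 1) = ∅ := by
      rw [Finset.filter_eq_empty_iff]
      intro z hz
      have := Finset.min'_le (S ∪ T) z (Finset.mem_union_left _ hz)
      push_neg
      linarith
    have hT' : T.filter (fun t => t ≤ (S ∪ T).min' hne - 1) = ∅ := by
      rw [Finset.filter_eq_empty_iff]
      intro z hz
      have := Finset.min'_le (S ∪ T) z (Finset.mem_union_right _ hz)
      push_neg
      linarith
    rw [hS, hT']
    simp
  have hlowm : (S ∪ T).min' hne - 1 ≤ (S ∪ T).max' hne := by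
    have := Finset.min'_le (S ∪ T) _ (Finset.max'_mem _ hne)
    linarith
  have hexists : ∀ k : Fin (S.card - T.card), ∃ s ∈ S, heightFn S T s = (k : ℤ) + 1 := by
    intro k
    have hkK : (k : ℕ) < S.card - T.card := k.isLt
    obtain ⟨c, hcS, _, _, hcH, _⟩ := crossing S T hdisj _ _ ((k:ℤ)+1) hlowm
      (by rw [hlowH]; omega) (by rw [hmH]; omega)
    exact ⟨c, hcS, hcH⟩
  refine ⟨hexists, ?_⟩
  intro r hr
  have key : ∀ i j : Fin (S.card - T.card), (i : ℕ) + 1 = (j : ℕ) → r i < r j := by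
    intro i j hij
    by_contra hnot
    push_neg at hnot
    set m := (S ∪ T).max' hne with hm
    obtain ⟨hbS, hHb, hbmax, hbleft⟩ := hr i
    obtain ⟨haS, hHa, hamax, haleft⟩ := hr j
    set b := r i with hbdef
    set a := r j with hadef
    set k : ℤ := ((i : ℕ) : ℤ) + 1 with hkdef
    have hk1 : 1 ≤ k := by omega
    have hHb' : heightFn S T b = k := by rw [hHb]
    have hHa' : heightFn S T a = k + 1 := by rw [hHa]; omega
    have hab : a < b := lt_of_le_of_ne hnot (fun h => by rw [h, hHb'] at hHa'; omega)
    have hjK : (j : ℕ) < S.card - T.card := j.isLt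
    have hbm : b ≤ m := Finset.le_max' _ b (Finset.mem_union_left _ hbS)
    have ham : a ≤ m := Finset.le_max' _ a (Finset.mem_union_left _ haS)
    have hkm : k + 1 ≤ heightFn S T m := by rw [hmH]; omega
    obtain ⟨c, hcS, hbc, hcm, hcH, hcclaim⟩ :=
      crossing S T hdisj b m (k + 1) hbm (by omega) hkm
    obtain ⟨b', hb'S, hb'a, hb'H, hb'claim⟩ :=
      crossing_left S T hdisj hne a k hk1 (Finset.mem_union_left _ haS) (by omega)
    have hb'a' : b' < a := lt_of_le_of_ne hb'a (fun h => by rw [h] at hb'H; omega)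
    have hb'b : b' < b := hb'a'.trans hab
    -- profit inequalities
    have hcH' : heightFn S T c = (j : ℤ) + 1 := by rw [hcH]; omega
    have hb'H' : heightFn S T b' = (i : ℤ) + 1 := by rw [hb'H]
    have hPc : profit S T N m c ≤ profit S T N m a := hamax c hcS hcH'
    have hPb'le : profit S T N m b' ≤ profit S T N m b := hbmax b' hb'S hb'H'
    have hPb'lt : profit S T N m b' < profit S T N m b :=
      lt_of_le_of_ne hPb'le
        (fun h => absurd (hbleft b' hb'S hb'H' h) (not_le.2 hb'b))
    simp only [profit] at hPc hPb'lt
    rw [hcH, hHa'] at hPc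
    rw [hb'H, hHb'] at hPb'lt
    -- integral identities
    have hac : a ≤ c := (hab.trans hbc).le
    have A2 : (∫ x in a..b, relHeight S T (k+1) x) + (∫ x in b..c, relHeight S T (k+1) x)
        = ∫ x in a..c, relHeight S T (k+1) x :=
      intervalIntegral.integral_add_adjacent_intervals
        (relHeight_intervalIntegrable S T (k+1) a b) (relHeight_intervalIntegrable S T (k+1) b c)
    have A2' : (∫ x in a..c, relHeight S T (k+1) x) + (∫ x in c..m, relHeight S T (k+1) x)
        = ∫ x in a..m, relHeight S T (k+1) x :=
      intervalIntegral.integral_add_adjacent_intervals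
        (relHeight_intervalIntegrable S T (k+1) a c) (relHeight_intervalIntegrable S T (k+1) c m)
    have A1 : (∫ x in b'..a, relHeight S T k x) + (∫ x in a..b, relHeight S T k x)
        = ∫ x in b'..b, relHeight S T k x :=
      intervalIntegral.integral_add_adjacent_intervals
        (relHeight_intervalIntegrable S T k b' a) (relHeight_intervalIntegrable S T k a b)
    have A1' : (∫ x in b'..b, relHeight S T k x) + (∫ x in b..m, relHeight S T k x)
        = ∫ x in b'..m, relHeight S T k x :=
      intervalIntegral.integral_add_adjacent_intervals
        (relHeight_intervalIntegrable S T k b' b) (relHeight_intervalIntegrable S T k b m)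
    have E1 : ∫ x in b'..a, relHeight S T k x = a - b' :=
      integral_relHeight_of_ge S T k b' a hb'a hb'claim
    have E2 : ∫ x in b..c, relHeight S T (k+1) x = -(c - b) :=
      integral_relHeight_of_lt S T (k+1) b c hbc.le hcclaim
    have E3 : (∫ x in a..b, relHeight S T (k+1) x) ≤ ∫ x in a..b, relHeight S T k x :=
      intervalIntegral.integral_mono_on hab.le
        (relHeight_intervalIntegrable S T (k+1) a b) (relHeight_intervalIntegrable S T k a b)
        (fun x _ => relHeight_anti S T k (k+1) (by omega) x)
    -- Lipschitz bounds
    have hNa := hN a haS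
    have hNb := hN b hbS
    have L1 : |b' - N b'| ≤ (a - b') + |a - N a| := by
      have h1 : |b' - N b'| ≤ |b' - N a| := (hN b' hb'S).2 (N a) hNa.1
      have h2 : |b' - N a| ≤ |b' - a| + |a - N a| := by
        calc |b' - N a| = |(b' - a) + (a - N a)| := by ring_nf
          _ ≤ |b' - a| + |a - N a| := abs_add_le _ _
      have h3 : |b' - a| = a - b' := by
        rw [abs_sub_comm]
        exact abs_of_nonneg (by linarith)
      linarith
    have L2 : |c - N c| ≤ (c - b) + |b - N b| := by
      have h1 : |c - N c| ≤ |c - N b| := (hN c hcS).2 (N b) hNb.1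
      have h2 : |c - N b| ≤ |c - b| + |b - N b| := by
        calc |c - N b| = |(c - b) + (b - N b)| := by ring_nf
          _ ≤ |c - b| + |b - N b| := abs_add_le _ _
      have h3 : |c - b| = c - b := abs_of_nonneg (by linarith)
      linarith
    linarith
  intro i j hij
  have hij' : (i : ℕ) < (j : ℕ) := hij
  have step : ∀ d : ℕ, ∀ i j : Fin (S.card - T.card), (j : ℕ) = (i : ℕ) + d + 1 → r i < r j := by
    intro d
    induction d with
    | zero =>
      intro i j h
      exact key i j (by omega)
    | succ d ih =>
      intro i j h
      have hlt : (i : ℕ) + d + 1 < S.card - T.card := by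
        have := j.isLt
        omega
      exact (ih i ⟨(i : ℕ) + d + 1, hlt⟩ rfl).trans
        (key ⟨(i : ℕ) + d + 1, hlt⟩ j (show ((i : ℕ) + d + 1) + 1 = (j : ℕ) by omega))
  exact step ((j : ℕ) - (i : ℕ) - 1) i j (by omega)
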